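/- Let ω ∈ ℤ[X] be a polynomial of degree k ≥ 2 and suppose there are reals s, t > 0 such that for every δ > 0 there is a constant C_δ with ∫₀¹∫₀¹ W_ω(u, v; N)^{2s} du dv ≤ C_δ·N^{2s − t + δ} for all positive integers N. Fix 0 < α < 1 and ε > 0 sufficiently small, set ζ₁ = 1/⌈N^{2 + ε − α}⌉ and ζ₂ = 1/⌈N^{k + 1 + ε − α}⌉, and partition [0,1)² into the ζ₁⁻¹·ζ₂⁻¹ squares [ℓζ₁, (ℓ+1)ζ₁) × [mζ₂, (m+1)ζ₂), 0 ≤ ℓ < ζ₁⁻¹, 0 ≤ m < ζ₂⁻¹. Let R̃ be the set of those squares that contain a point (x, y) with W_ω(x, y; N) ≥ N^α. Then for every δ > 0 there is a constant C'_δ such that #R̃ ≤ C'_δ·(ζ₁·ζ₂)^{−1}·N^{2s(1−α) − t + δ} for all positive integers N. -/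

import Mathlib

open MeasureTheory Finset Polynomial

/-- `e(t) = exp(2πit)`. -/
noncomputable def e (t : ℝ) : ℂ := Complex.exp (2 * Real.pi * Complex.I * t)

/-- The Weyl sum `S_ω(x, y; N) = ∑_{n=1}^{N} e(x·n + y·ω(n))`. -/
noncomputable def WeylS (ω : Polynomial ℤ) (x y : ℝ) (N : ℕ) : ℂ :=
  ∑ n ∈ Finset.Icc 1 N, e (x * (n : ℝ) + y * ((ω.eval (n : ℤ) : ℤ) : ℝ))

/-- `η(k)` from the paper. -/
def etaP (k : ℕ) : ℕ :=
  if 2 * k + 2 ≥ (Nat.sqrt (2 * k + 2)) ^ 2 + Nat.sqrt (2 * k + 2) then 0 else 1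

/-- `s₀(k)` from the paper. -/
def s0 (k : ℕ) : ℕ :=
  if k = 2 then 3 else if k = 3 then 5 else if k = 4 then 8 else if k = 5 then 12
  else if k = 6 then 18 else if k = 7 then 24 else if k = 8 then 31 else if k = 9 then 40
  else if k = 10 then 49 else k * (k - 1) / 2 + Nat.sqrt (2 * k + 2) - etaP k

/-- The completed sum
`W_ω(x, y; N) = ∑_{h=−N}^{N} (1/(|h|+1))·|∑_{n=1}^{N} e(h·n/N + x·n + y·ω(n))|`. -/
noncomputable def WeylW (ω : Polynomial ℤ) (x y : ℝ) (N : ℕ) : ℝ :=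
  ∑ h ∈ Finset.Icc (-(N : ℤ)) (N : ℤ), (1 / (|(h : ℝ)| + 1)) *
    ‖(∑ n ∈ Finset.Icc 1 N,
      e ((h : ℝ) * (n : ℝ) / (N : ℝ) + x * (n : ℝ) + y * ((ω.eval (n : ℤ) : ℤ) : ℝ)))‖

/-!
The weights `1 / (|h| + 1)` sum to `O(log N)` and each phase of `W_ω` moves by at most
`N |Δx| + |ω(n)| |Δy| ≪ N |Δx| + N^k |Δy|`, so `W_ω(·, ·; N)` varies by `N^{α - ε + o(1)}` across
a cell of size `N^{α-2-ε} × N^{α-k-1-ε}`. Hence for large `N` a cell of `R̃` carries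
`W_ω ≥ N^α / 2` on all of its closure and contributes at least `(N^α / 2)^{2s} ζ₁ ζ₂` to
`∫∫ W_ω^{2s}`, which the mean value hypothesis bounds by `C_δ N^{2s-t+δ}`. The finitely many
small `N` only affect the constant.
-/

@[fun_prop]
lemma continuous_e : Continuous e := by
  unfold e; fun_prop

lemma norm_e (t : ℝ) : ‖e t‖ = 1 := by
  rw [e, show 2 * Real.pi * Complex.I * t = (2 * Real.pi * t : ℝ) * Complex.I by push_cast; ring]
  exact Complex.norm_exp_ofReal_mul_I _

lemma norm_e_sub_e_le (a b : ℝ) : ‖e a - e b‖ ≤ 2 * Real.pi * |a - b| := by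
  have hfactor :
      e a - e b = e b * (Complex.exp (Complex.I * (2 * Real.pi * (a - b) : ℝ)) - 1) := by
    simp only [e, mul_sub, mul_one, ← Complex.exp_add]
    push_cast; ring_nf
  rw [hfactor, norm_mul, norm_e, one_mul]
  refine Real.norm_exp_I_mul_ofReal_sub_one_le.trans_eq ?_
  rw [Real.norm_eq_abs, abs_mul, abs_of_pos Real.two_pi_pos]

lemma norm_sum_e_sub_sum_e_le {ι : Type*} (s : Finset ι) (φ ψ : ι → ℝ) :
    ‖∑ n ∈ s, e (φ n) - ∑ n ∈ s, e (ψ n)‖ ≤ 2 * Real.pi * ∑ n ∈ s, |φ n - ψ n| := by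
  rw [← sum_sub_distrib, mul_sum]
  exact (norm_sum_le _ _).trans (sum_le_sum fun n _ => norm_e_sub_e_le _ _)

section Grid

open intervalIntegral

lemma sum_intervalIntegral_cells {E : Type*} [NormedAddCommGroup E] [NormedSpace ℝ E]
    {f : ℝ → E} (hf : Continuous f) {M : ℕ} (hM : M ≠ 0) :
    ∑ m ∈ range M, ∫ v in (m / M : ℝ)..((m + 1) / M), f v = ∫ v in (0 : ℝ)..1, f v := by
  have h := sum_integral_adjacent_intervals (a := fun m : ℕ => (m / M : ℝ)) (n := M) (μ := volume)
    (fun m _ => hf.intervalIntegrable _ _)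
  simp only [Nat.cast_zero, zero_div, Nat.cast_add, Nat.cast_one] at h
  rwa [div_self (Nat.cast_ne_zero.mpr hM)] at h

lemma sum_integral_cells_eq_integral_unitSquare {f : ℝ → ℝ → ℝ}
    (hf : Continuous (Function.uncurry f)) {L M : ℕ} (hL : L ≠ 0) (hM : M ≠ 0) :
    ∑ p ∈ range L ×ˢ range M,
        ∫ u in (p.1 / L : ℝ)..((p.1 + 1) / L), ∫ v in (p.2 / M : ℝ)..((p.2 + 1) / M), f u v =
      ∫ u in (0 : ℝ)..1, ∫ v in (0 : ℝ)..1, f u v := by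
  have hslice (a b : ℝ) : Continuous fun u => ∫ v in a..b, f u v :=
    continuous_parametric_intervalIntegral_of_continuous' hf a b
  rw [sum_product]
  simp_rw [← intervalIntegral.integral_finsetSum fun m _ => (hslice _ _).intervalIntegrable _ _,
    sum_intervalIntegral_cells (hf.uncurry_left _) hM]
  exact sum_intervalIntegral_cells (hslice 0 1) hL

lemma mul_area_le_integral_box {f : ℝ → ℝ → ℝ} (hf : Continuous (Function.uncurry f))
    {a b a' b' c : ℝ} (hab : a ≤ b) (hab' : a' ≤ b')
    (hc : ∀ u ∈ Set.Icc a b, ∀ v ∈ Set.Icc a' b', c ≤ f u v) :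
    c * ((b - a) * (b' - a')) ≤ ∫ u in a..b, ∫ v in a'..b', f u v := by
  have hslice : ∀ u ∈ Set.Icc a b, c * (b' - a') ≤ ∫ v in a'..b', f u v := fun u hu => by
    simpa [mul_comm] using integral_mono_on (μ := volume) hab' intervalIntegrable_const
      ((hf.uncurry_left u).intervalIntegrable _ _) (hc u hu)
  have := integral_mono_on (μ := volume) hab intervalIntegrable_const
    ((continuous_parametric_intervalIntegral_of_continuous' hf a' b').intervalIntegrable _ _) hslice
  rw [intervalIntegral.integral_const, smul_eq_mul] at this
  linarith

lemma card_mul_le_integral_of_le_on_cells {f : ℝ → ℝ → ℝ}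
    (hf : Continuous (Function.uncurry f)) (hf0 : ∀ u v, 0 ≤ f u v) {L M : ℕ}
    (hL : L ≠ 0) (hM : M ≠ 0) {R : Finset (ℕ × ℕ)} (hR : R ⊆ range L ×ˢ range M)
    {c : ℝ} (hc : ∀ p ∈ R, ∀ u ∈ Set.Icc (p.1 / L : ℝ) ((p.1 + 1) / L),
      ∀ v ∈ Set.Icc (p.2 / M : ℝ) ((p.2 + 1) / M), c ≤ f u v) :
    R.card * c ≤ L * M * ∫ u in (0 : ℝ)..1, ∫ v in (0 : ℝ)..1, f u v := by
  set J : ℕ × ℕ → ℝ := fun p =>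
    ∫ u in (p.1 / L : ℝ)..((p.1 + 1) / L), ∫ v in (p.2 / M : ℝ)..((p.2 + 1) / M), f u v
  have hLpos : (0 : ℝ) < L := by positivity
  have hMpos : (0 : ℝ) < M := by positivity
  have hJ0 (p : ℕ × ℕ) : 0 ≤ J p :=
    integral_nonneg (by gcongr; linarith) fun u _ =>
      integral_nonneg (by gcongr; linarith) fun v _ => hf0 u v
  have hJc : ∀ p ∈ R, c / (L * M) ≤ J p := fun p hp => by
    have := mul_area_le_integral_box hf (by gcongr; linarith) (by gcongr; linarith) (hc p hp)
    convert this using 1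
    field_simp; ring
  calc R.card * c = L * M * (R.card * (c / (L * M))) := by field_simp
    _ ≤ L * M * ∑ p ∈ R, J p := by
      gcongr
      simpa using card_nsmul_le_sum R J _ hJc
    _ ≤ L * M * ∑ p ∈ range L ×ˢ range M, J p :=
      mul_le_mul_of_nonneg_left
        (sum_le_sum_of_subset_of_nonneg hR fun p _ _ => hJ0 p) (by positivity)
    _ = _ := by rw [sum_integral_cells_eq_integral_unitSquare hf hL hM]

end Grid

lemma sum_inv_abs_add_one_le (N : ℕ) :
    ∑ h ∈ Icc (-(N : ℤ)) N, 1 / (|(h : ℝ)| + 1) ≤ 2 + 2 * Real.log (N + 1) := by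
  classical
  set g : ℤ → ℝ := fun h => 1 / (|(h : ℝ)| + 1)
  have hg0 (h : ℤ) : 0 ≤ g h := by positivity
  set A := (range (N + 1)).image fun j : ℕ => (j : ℤ)
  set B := (range (N + 1)).image fun j : ℕ => -(j : ℤ)
  have hcover : Icc (-(N : ℤ)) N ⊆ A ∪ B := by
    intro h hh
    rw [mem_Icc] at hh
    simp only [A, B, mem_union, mem_image, mem_range]
    rcases le_total 0 h with h0 | h0
    · exact Or.inl ⟨h.toNat, by omega, by omega⟩
    · exact Or.inr ⟨(-h).toNat, by omega, by omega⟩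
  have hharmonic : ∑ j ∈ range (N + 1), 1 / ((j : ℝ) + 1) = harmonic (N + 1) := by
    simp [harmonic]
  have hA : ∑ h ∈ A, g h ≤ harmonic (N + 1) := by
    refine (sum_image_le_of_nonneg fun h _ => hg0 h).trans_eq ?_
    rw [← hharmonic]
    exact sum_congr rfl fun j _ => by simp [g]
  have hB : ∑ h ∈ B, g h ≤ harmonic (N + 1) := by
    refine (sum_image_le_of_nonneg fun h _ => hg0 h).trans_eq ?_
    rw [← hharmonic]
    exact sum_congr rfl fun j _ => by simp [g]
  have hlog := harmonic_le_one_add_log (N + 1)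
  push_cast at hlog
  calc ∑ h ∈ Icc (-(N : ℤ)) N, g h ≤ ∑ h ∈ A ∪ B, g h :=
        sum_le_sum_of_subset_of_nonneg hcover fun h _ _ => hg0 h
    _ ≤ ∑ h ∈ A, g h + ∑ h ∈ B, g h := by
        rw [← sum_union_inter]
        linarith [sum_nonneg fun h (_ : h ∈ A ∩ B) => hg0 h]
    _ ≤ 2 + 2 * Real.log (N + 1) := by linarith

lemma exists_sum_inv_abs_add_one_le_mul_rpow {r : ℝ} (hr : 0 < r) :
    ∃ K, 0 ≤ K ∧
      ∀ N : ℕ, 0 < N → ∑ h ∈ Icc (-(N : ℤ)) N, 1 / (|(h : ℝ)| + 1) ≤ K * N ^ r := by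
  refine ⟨2 + 2 * 2 ^ r / r, by positivity, fun N hN => (sum_inv_abs_add_one_le N).trans ?_⟩
  have hN1 : (1 : ℝ) ≤ N := by exact_mod_cast hN
  have hlog : Real.log (N + 1) ≤ 2 ^ r * N ^ r / r := calc
    Real.log (N + 1) ≤ (N + 1) ^ r / r := Real.log_le_rpow_div (by positivity) hr
    _ ≤ (2 * N) ^ r / r := by gcongr; linarith
    _ = 2 ^ r * N ^ r / r := by rw [Real.mul_rpow zero_le_two (by positivity)]
  have hNr : (1 : ℝ) ≤ N ^ r := Real.one_le_rpow hN1 hr.le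
  calc 2 + 2 * Real.log (N + 1) ≤ 2 * N ^ r + 2 * (2 ^ r * N ^ r / r) := by gcongr; linarith
    _ = (2 + 2 * 2 ^ r / r) * N ^ r := by ring

lemma exists_abs_eval_le_mul_pow {ω : ℤ[X]} {k : ℕ} (hω : ω.natDegree ≤ k) :
    ∃ C, 0 ≤ C ∧ ∀ N n : ℕ, n ∈ Icc 1 N → |((ω.eval (n : ℤ) : ℤ) : ℝ)| ≤ C * N ^ k := by
  refine ⟨∑ i ∈ range (k + 1), |(ω.coeff i : ℝ)|, by positivity, fun N n hn => ?_⟩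
  obtain ⟨hn1, hnN⟩ := mem_Icc.mp hn
  rw [ω.eval_eq_sum_range' (Nat.lt_succ_of_le hω), sum_mul]
  push_cast
  refine (abs_sum_le_sum_abs _ _).trans (sum_le_sum fun i hi => ?_)
  rw [abs_mul, abs_of_nonneg (by positivity : (0 : ℝ) ≤ n ^ i)]
  gcongr
  calc (n : ℝ) ^ i ≤ (N : ℝ) ^ i := by gcongr
    _ ≤ (N : ℝ) ^ k := pow_le_pow_right₀ (by exact_mod_cast hn1.trans hnN)
        (Nat.lt_succ_iff.mp (mem_range.mp hi))

lemma weylW_nonneg (ω : ℤ[X]) (x y : ℝ) (N : ℕ) : 0 ≤ WeylW ω x y N :=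
  sum_nonneg fun _ _ => by positivity

lemma continuous_weylW (ω : ℤ[X]) (N : ℕ) :
    Continuous fun p : ℝ × ℝ => WeylW ω p.1 p.2 N := by
  unfold WeylW
  fun_prop

lemma abs_weylW_sub_le (ω : ℤ[X]) (N : ℕ) {x y x' y' P : ℝ}
    (hP : ∀ n ∈ Icc 1 N, |((ω.eval (n : ℤ) : ℤ) : ℝ)| ≤ P) :
    |WeylW ω x y N - WeylW ω x' y' N| ≤ (∑ h ∈ Icc (-(N : ℤ)) N, 1 / (|(h : ℝ)| + 1)) *
      (2 * Real.pi * (N * (N * |x - x'| + P * |y - y'|))) := by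
  unfold WeylW
  rw [← sum_sub_distrib, sum_mul]
  refine (abs_sum_le_sum_abs _ _).trans (sum_le_sum fun h _ => ?_)
  rw [← mul_sub, abs_mul, abs_of_pos (by positivity)]
  refine mul_le_mul_of_nonneg_left ?_ (by positivity)
  refine (abs_norm_sub_norm_le _ _).trans ((norm_sum_e_sub_sum_e_le _ _ _).trans ?_)
  gcongr
  calc _ ≤ ∑ n ∈ Icc 1 N, (N * |x - x'| + P * |y - y'|) := by
        refine sum_le_sum fun n hn => ?_
        have hnN : (n : ℝ) ≤ N := by exact_mod_cast (mem_Icc.mp hn).2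
        calc _ = |(x - x') * n + (y - y') * ((ω.eval (n : ℤ) : ℤ) : ℝ)| := by ring_nf
          _ ≤ |x - x'| * n + |y - y'| * |((ω.eval (n : ℤ) : ℤ) : ℝ)| := by
            simpa [abs_mul] using abs_add_le ((x - x') * n) ((y - y') * ((ω.eval (n : ℤ) : ℤ) : ℝ))
          _ ≤ N * |x - x'| + P * |y - y'| := by
            rw [mul_comm (N : ℝ), mul_comm P]
            gcongr
            exact hP n hn
    _ = N * (N * |x - x'| + P * |y - y'|) := by simp [mul_add]

open Filter in
lemma eventually_half_rpow_le_weylW {ω : ℤ[X]} {k : ℕ} (hω : ω.natDegree ≤ k)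
    {α ε : ℝ} (hε : 0 < ε) :
    ∀ᶠ N : ℕ in atTop, ∀ x y u v : ℝ, (N : ℝ) ^ 2 * |u - x| ≤ (N : ℝ) ^ (α - ε) →
      (N : ℝ) ^ (k + 1) * |v - y| ≤ (N : ℝ) ^ (α - ε) → (N : ℝ) ^ α ≤ WeylW ω x y N →
      (N : ℝ) ^ α / 2 ≤ WeylW ω u v N := by
  obtain ⟨C, hC0, hC⟩ := exists_abs_eval_le_mul_pow hω
  obtain ⟨K, hK0, hK⟩ := exists_sum_inv_abs_add_one_le_mul_rpow (half_pos hε)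
  have hgrow : Tendsto (fun N : ℕ => (N : ℝ) ^ (ε / 2)) atTop atTop :=
    (tendsto_rpow_atTop (half_pos hε)).comp tendsto_natCast_atTop_atTop
  filter_upwards [eventually_gt_atTop 0,
    hgrow.eventually_ge_atTop (4 * Real.pi * K * (1 + C))] with N hN hlarge x y u v hu hv hW
  have hN0 : (0 : ℝ) < N := by exact_mod_cast hN
  have hdist : (N : ℝ) * (N * |u - x| + C * N ^ k * |v - y|) ≤ (1 + C) * N ^ (α - ε) := calc
    _ = (N : ℝ) ^ 2 * |u - x| + C * ((N : ℝ) ^ (k + 1) * |v - y|) := by ring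
    _ ≤ (N : ℝ) ^ (α - ε) + C * (N : ℝ) ^ (α - ε) := by gcongr
    _ = (1 + C) * N ^ (α - ε) := by ring
  have hsplit : (N : ℝ) ^ α = N ^ (ε / 2) * N ^ (ε / 2) * N ^ (α - ε) := by
    rw [← Real.rpow_add hN0, ← Real.rpow_add hN0]
    ring_nf
  have herr : |WeylW ω u v N - WeylW ω x y N| ≤ (N : ℝ) ^ α / 2 := calc
    _ ≤ (K * N ^ (ε / 2)) * (2 * Real.pi * ((1 + C) * N ^ (α - ε))) :=
      (abs_weylW_sub_le ω N (hC N)).trans (by gcongr; exact hK N hN)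
    _ = (2 * Real.pi * K * (1 + C)) * (N ^ (ε / 2) * N ^ (α - ε)) := by ring
    _ ≤ (N ^ (ε / 2) / 2) * (N ^ (ε / 2) * N ^ (α - ε)) := by gcongr; linarith
    _ = (N : ℝ) ^ α / 2 := by rw [hsplit]; ring
  linarith [(abs_le.mp herr).1]

open scoped Classical in
noncomputable def largeValueCells (ω : ℤ[X]) (α : ℝ) (N L M : ℕ) : Finset (ℕ × ℕ) :=
  (range L ×ˢ range M).filter
    (fun p : ℕ × ℕ => ∃ x y : ℝ,
      x ∈ Set.Ico ((p.1 : ℝ) * (1 / (L : ℝ))) (((p.1 : ℝ) + 1) * (1 / (L : ℝ))) ∧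
      y ∈ Set.Ico ((p.2 : ℝ) * (1 / (M : ℝ))) (((p.2 : ℝ) + 1) * (1 / (M : ℝ))) ∧
      (N : ℝ) ^ α ≤ WeylW ω x y N)

lemma abs_sub_le_of_mem_cell {ℓ : ℕ} {L u x : ℝ}
    (hu : u ∈ Set.Icc (ℓ / L) ((ℓ + 1) / L)) (hx : x ∈ Set.Ico (ℓ * (1 / L)) ((ℓ + 1) * (1 / L))) :
    |u - x| ≤ 1 / L := by
  simp only [mul_one_div, add_div, Set.mem_Icc, Set.mem_Ico] at hu hx
  rw [abs_sub_le_iff]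
  constructor <;> linarith

lemma npow_mul_le_rpow_of_le_one_div_ceil {N j : ℕ} (hN : 0 < N) {θ d : ℝ}
    (hd : d ≤ 1 / ⌈(N : ℝ) ^ ((j : ℝ) - θ)⌉₊) : (N : ℝ) ^ j * d ≤ (N : ℝ) ^ θ := by
  have hN0 : (0 : ℝ) < N := by exact_mod_cast hN
  have hpos : 0 < (N : ℝ) ^ ((j : ℝ) - θ) := Real.rpow_pos_of_pos hN0 _
  calc (N : ℝ) ^ j * d ≤ (N : ℝ) ^ j * (1 / (N : ℝ) ^ ((j : ℝ) - θ)) := by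
        gcongr
        exact hd.trans (one_div_le_one_div_of_le hpos (Nat.le_ceil _))
    _ = (N : ℝ) ^ θ := by
        rw [← Real.rpow_natCast, mul_one_div, ← Real.rpow_sub hN0, sub_sub_cancel]

open Filter in
open scoped Classical in
lemma eventually_card_largeValueCells_mul_le {ω : ℤ[X]} {k : ℕ} (hω : ω.natDegree ≤ k)
    {α ε s : ℝ} (hε : 0 < ε) (hs : 0 ≤ s) :
    ∀ᶠ N : ℕ in atTop,
      let L := ⌈(N : ℝ) ^ (2 + ε - α)⌉₊
      let M := ⌈(N : ℝ) ^ ((k : ℝ) + 1 + ε - α)⌉₊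
      ((largeValueCells ω α N L M).card : ℝ) * ((N : ℝ) ^ α / 2) ^ (2 * s) ≤
        L * M * ∫ u in (0 : ℝ)..1, ∫ v in (0 : ℝ)..1, WeylW ω u v N ^ (2 * s) := by
  filter_upwards [eventually_half_rpow_le_weylW hω hε, eventually_gt_atTop 0] with N hhalf hN
  intro L M
  have hN0 : (0 : ℝ) < N := by exact_mod_cast hN
  have hL : L ≠ 0 := (Nat.ceil_pos.mpr (Real.rpow_pos_of_pos hN0 _)).ne'
  have hM : M ≠ 0 := (Nat.ceil_pos.mpr (Real.rpow_pos_of_pos hN0 _)).ne'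
  have hcont : Continuous (Function.uncurry fun u v => WeylW ω u v N ^ (2 * s)) :=
    (continuous_weylW ω N).rpow_const fun _ => Or.inr (by linarith)
  refine card_mul_le_integral_of_le_on_cells hcont
    (fun u v => Real.rpow_nonneg (weylW_nonneg ω u v N) _) hL hM (filter_subset _ _) ?_
  intro p hp u hu v hv
  obtain ⟨-, x, y, hx, hy, hW⟩ := mem_filter.mp hp
  refine Real.rpow_le_rpow (by positivity) (hhalf x y u v ?_ ?_ hW) (by linarith)
  · refine npow_mul_le_rpow_of_le_one_div_ceil (j := 2) hN ?_
    convert abs_sub_le_of_mem_cell hu hx using 5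
    push_cast; ring
  · refine npow_mul_le_rpow_of_le_one_div_ceil (j := k + 1) hN ?_
    convert abs_sub_le_of_mem_cell hv hy using 5
    push_cast; ring

open scoped Classical in
theorem counting_squares_with_large_values_general
    (k : ℕ) (ω : Polynomial ℤ) (hω : ω.natDegree = k)
    (s t : ℝ) (hs : 0 < s)
    (hmean : ∀ δ : ℝ, 0 < δ → ∃ Cδ : ℝ, ∀ N : ℕ, 0 < N →
      (∫ u in (0 : ℝ)..1, ∫ v in (0 : ℝ)..1, WeylW ω u v N ^ (2 * s)) ≤
        Cδ * (N : ℝ) ^ (2 * s - t + δ))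
    (α : ℝ) :
    ∃ ε₀ : ℝ, 0 < ε₀ ∧ ∀ ε : ℝ, 0 < ε → ε < ε₀ →
    ∀ δ : ℝ, 0 < δ →
    ∃ C' : ℝ, ∀ N : ℕ, 0 < N →
      ∀ L M : ℕ, L = ⌈(N : ℝ) ^ (2 + ε - α)⌉₊ → M = ⌈(N : ℝ) ^ ((k : ℝ) + 1 + ε - α)⌉₊ →
      ((((Finset.range L ×ˢ Finset.range M).filter
          (fun p : ℕ × ℕ => ∃ x y : ℝ,
            x ∈ Set.Ico ((p.1 : ℝ) * (1 / (L : ℝ))) (((p.1 : ℝ) + 1) * (1 / (L : ℝ))) ∧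
            y ∈ Set.Ico ((p.2 : ℝ) * (1 / (M : ℝ))) (((p.2 : ℝ) + 1) * (1 / (M : ℝ))) ∧
            (N : ℝ) ^ α ≤ WeylW ω x y N)).card : ℝ) ≤
        C' * ((L : ℝ) * (M : ℝ)) * (N : ℝ) ^ (2 * s * (1 - α) - t + δ)) := by
  refine ⟨1, one_pos, fun ε hε _ δ hδ => ?_⟩
  obtain ⟨Cδ, hCδ⟩ := hmean δ hδ
  set E := 2 * s * (1 - α) - t + δ with hE
  have hbound : ∀ᶠ N : ℕ in Filter.atTop,
      ‖((largeValueCells ω α N ⌈(N : ℝ) ^ (2 + ε - α)⌉₊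
        ⌈(N : ℝ) ^ ((k : ℝ) + 1 + ε - α)⌉₊).card : ℝ)‖ ≤
      2 ^ (2 * s) * Cδ * ‖(⌈(N : ℝ) ^ (2 + ε - α)⌉₊ : ℝ) *
        ⌈(N : ℝ) ^ ((k : ℝ) + 1 + ε - α)⌉₊ * (N : ℝ) ^ E‖ := by
    filter_upwards [eventually_card_largeValueCells_mul_le (α := α) hω.le hε hs.le,
      Filter.eventually_gt_atTop 0] with N hcard hN
    have hN0 : (0 : ℝ) < N := by exact_mod_cast hN
    have hc : (0 : ℝ) < ((N : ℝ) ^ α / 2) ^ (2 * s) := by positivity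
    have hscale : 2 ^ (2 * s) * ((N : ℝ) ^ α / 2) ^ (2 * s) * (N : ℝ) ^ E =
        (N : ℝ) ^ (2 * s - t + δ) := by
      rw [Real.div_rpow (by positivity) zero_le_two, ← Real.rpow_mul hN0.le,
        mul_div_cancel₀ _ (by positivity), ← Real.rpow_add hN0, hE]
      ring_nf
    rw [Real.norm_natCast, Real.norm_of_nonneg (by positivity), ← mul_le_mul_iff_of_pos_right hc]
    refine hcard.trans ?_
    calc _ ≤ _ * (Cδ * (N : ℝ) ^ (2 * s - t + δ)) := by gcongr; exact hCδ N hN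
      _ = _ := by rw [← hscale]; ring
  obtain ⟨C', -, hC'⟩ :=
    Asymptotics.bound_of_isBigO_nat_atTop (Asymptotics.IsBigO.of_bound _ hbound)
  refine ⟨C', fun N hN L M hL hM => ?_⟩
  subst hL hM
  have hN0 : (0 : ℝ) < N := by exact_mod_cast hN
  have hceil (a : ℝ) : (0 : ℝ) < ⌈(N : ℝ) ^ a⌉₊ :=
    Nat.cast_pos.mpr (Nat.ceil_pos.mpr (Real.rpow_pos_of_pos hN0 a))
  have := @hC' N (by positivity)
  rwa [Real.norm_natCast, Real.norm_of_nonneg (by positivity), ← mul_assoc] at this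

open scoped Classical in
theorem counting_squares_with_large_values
    (k : ℕ) (hk : 2 ≤ k) (ω : Polynomial ℤ) (hω : ω.natDegree = k)
    (s t : ℝ) (hs : 0 < s) (ht : 0 < t)
    (hmean : ∀ δ : ℝ, 0 < δ → ∃ Cδ : ℝ, ∀ N : ℕ, 0 < N →
      (∫ u in (0 : ℝ)..1, ∫ v in (0 : ℝ)..1, WeylW ω u v N ^ (2 * s)) ≤
        Cδ * (N : ℝ) ^ (2 * s - t + δ))
    (α : ℝ) (hα0 : 0 < α) (hα1 : α < 1) :
    ∃ ε₀ : ℝ, 0 < ε₀ ∧ ∀ ε : ℝ, 0 < ε → ε < ε₀ →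
    ∀ δ : ℝ, 0 < δ →
    ∃ C' : ℝ, ∀ N : ℕ, 0 < N →
      ∀ L M : ℕ, L = ⌈(N : ℝ) ^ (2 + ε - α)⌉₊ → M = ⌈(N : ℝ) ^ ((k : ℝ) + 1 + ε - α)⌉₊ →
      ((((Finset.range L ×ˢ Finset.range M).filter
          (fun p : ℕ × ℕ => ∃ x y : ℝ,
            x ∈ Set.Ico ((p.1 : ℝ) * (1 / (L : ℝ))) (((p.1 : ℝ) + 1) * (1 / (L : ℝ))) ∧
            y ∈ Set.Ico ((p.2 : ℝ) * (1 / (M : ℝ))) (((p.2 : ℝ) + 1) * (1 / (M : ℝ))) ∧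
            (N : ℝ) ^ α ≤ WeylW ω x y N)).card : ℝ) ≤
        C' * ((L : ℝ) * (M : ℝ)) * (N : ℝ) ^ (2 * s * (1 - α) - t + δ)) :=
  counting_squares_with_large_values_general k ω hω s t hs hmean α
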